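/- Let p, q be probability vectors on Fin d. If there exist m ≥ 1 and a probability vector r on Fin m such that p ⊗ r ≺ q ⊗ r, then the number of indices i with q i ≠ 0 is at most the number of indices i with p i ≠ 0. -/

import Mathlib

open Finset

/-- max over finsets of card k of the sum of entries -/
noncomputable def maxSum {ι : Type*} [Fintype ι] (p : ι → ℝ) (k : ℕ) : ℝ :=
  sSup {x : ℝ | ∃ S : Finset ι, S.card = k ∧ x = ∑ i ∈ S, p i}

/-- majorization: equal total sums, and for each k the max k-term partial sum
of `p` is at most that of `q`. -/
def Maj {ι : Type*} [Fintype ι] (p q : ι → ℝ) : Prop :=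
  (∑ i, p i = ∑ i, q i) ∧ ∀ k : ℕ, maxSum p k ≤ maxSum q k

/-- a probability vector: nonnegative entries summing to one -/
def IsProbVec {ι : Type*} [Fintype ι] (p : ι → ℝ) : Prop :=
  (∀ i, 0 ≤ p i) ∧ ∑ i, p i = 1

/-- tensor product of two vectors -/
def tensor {ι κ : Type*} (p : ι → ℝ) (r : κ → ℝ) : ι × κ → ℝ :=
  fun x => p x.1 * r x.2

/-!
Let `k` be the number of nonzero entries of `p ⊗ r`. Those `k` entries already carry the whole
mass of `p ⊗ r`, so by majorization some `k` entries of the nonnegative vector `q ⊗ r` carry its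
whole mass as well, and they must include every nonzero entry of `q ⊗ r`. Hence
`#supp q · #supp r ≤ #supp p · #supp r`, and `supp r` is nonempty.
-/

section MaxSum

variable {ι : Type*} [Fintype ι]

lemma maxSum_set_finite (p : ι → ℝ) (k : ℕ) :
    {x : ℝ | ∃ S : Finset ι, S.card = k ∧ x = ∑ i ∈ S, p i}.Finite := by
  convert (Set.toFinite {S : Finset ι | S.card = k}).image (fun S => ∑ i ∈ S, p i) using 1
  ext x
  simp only [Set.mem_ofPred_eq, Set.mem_image, eq_comm (a := x)]

lemma sum_le_maxSum (p : ι → ℝ) (S : Finset ι) : ∑ i ∈ S, p i ≤ maxSum p S.card :=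
  le_csSup (maxSum_set_finite p _).bddAbove ⟨S, rfl, rfl⟩

lemma exists_card_eq_sum_eq_maxSum (p : ι → ℝ) {k : ℕ} (hk : k ≤ Fintype.card ι) :
    ∃ S : Finset ι, S.card = k ∧ ∑ i ∈ S, p i = maxSum p k := by
  obtain ⟨S, -, hS⟩ := exists_subset_card_eq (s := (univ : Finset ι)) (by simpa using hk)
  have hne : {x : ℝ | ∃ S : Finset ι, S.card = k ∧ x = ∑ i ∈ S, p i}.Nonempty := ⟨_, S, hS, rfl⟩
  obtain ⟨T, hT, hsum⟩ := hne.csSup_mem (maxSum_set_finite p k)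
  exact ⟨T, hT, hsum.symm⟩

end MaxSum

lemma filter_ne_zero_subset_of_sum_le {ι : Type*} [Fintype ι] [DecidableEq ι] {q : ι → ℝ}
    (hq : ∀ i, 0 ≤ q i) {S : Finset ι} (hS : ∑ i, q i ≤ ∑ i ∈ S, q i) :
    univ.filter (fun i => q i ≠ 0) ⊆ S := by
  have hcompl : ∑ i ∈ Sᶜ, q i = 0 := by
    have := sum_add_sum_compl S q
    linarith [sum_nonneg fun i (_ : i ∈ Sᶜ) => hq i]
  intro i hi
  by_contra hiS
  exact (mem_filter.1 hi).2 ((sum_eq_zero_iff_of_nonneg fun j _ => hq j).1 hcompl i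
    (mem_compl.2 hiS))

theorem card_filter_ne_zero_le_of_maj {ι : Type*} [Fintype ι] {p q : ι → ℝ} (hpq : Maj p q)
    (hq : ∀ i, 0 ≤ q i) :
    (univ.filter (fun i => q i ≠ 0)).card ≤ (univ.filter (fun i => p i ≠ 0)).card := by
  classical
  set k := (univ.filter (fun i => p i ≠ 0)).card
  obtain ⟨S, hSk, hS⟩ := exists_card_eq_sum_eq_maxSum q (k := k) (card_le_univ _)
  have hmass : ∑ i, q i ≤ ∑ i ∈ S, q i :=
    calc ∑ i, q i = ∑ i ∈ univ.filter (fun i => p i ≠ 0), p i := by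
          rw [sum_filter_ne_zero, hpq.1]
      _ ≤ maxSum p k := sum_le_maxSum p _
      _ ≤ maxSum q k := hpq.2 k
      _ = ∑ i ∈ S, q i := hS.symm
  exact hSk ▸ card_le_card (filter_ne_zero_subset_of_sum_le hq hmass)

lemma card_filter_tensor_ne_zero {ι κ : Type*} [Fintype ι] [Fintype κ] (p : ι → ℝ) (r : κ → ℝ) :
    (univ.filter (fun x => tensor p r x ≠ 0)).card =
      (univ.filter (fun i => p i ≠ 0)).card * (univ.filter (fun j => r j ≠ 0)).card := by
  rw [← card_product]
  congr 1
  ext ⟨i, j⟩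
  simp [tensor]

lemma IsProbVec.filter_ne_zero_nonempty {ι : Type*} [Fintype ι] {r : ι → ℝ} (hr : IsProbVec r) :
    (univ.filter (fun j => r j ≠ 0)).Nonempty := by
  by_contra hempty
  have : ∑ j, r j = 0 := by
    rw [← sum_filter_ne_zero, not_nonempty_iff_eq_empty.1 hempty, sum_empty]
  linarith [hr.2]

theorem coherence_rank_nonincreasing_under_catalytic_majorization_general
    (d : ℕ) (p q : Fin d → ℝ) (hq : IsProbVec q)
    (h : ∃ m : ℕ, 1 ≤ m ∧ ∃ r : Fin m → ℝ, IsProbVec r ∧ Maj (tensor p r) (tensor q r)) :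
    (Finset.univ.filter (fun i => q i ≠ 0)).card ≤
      (Finset.univ.filter (fun i => p i ≠ 0)).card := by
  obtain ⟨m, -, r, hr, hmaj⟩ := h
  have hcard := card_filter_ne_zero_le_of_maj hmaj fun x => mul_nonneg (hq.1 x.1) (hr.1 x.2)
  rw [card_filter_tensor_ne_zero, card_filter_tensor_ne_zero] at hcard
  exact Nat.le_of_mul_le_mul_right hcard hr.filter_ne_zero_nonempty.card_pos

/-- The number of nonzero entries (coherence rank) cannot increase under
catalytic majorization. -/
theorem coherence_rank_nonincreasing_under_catalytic_majorization
    (d : ℕ) (p q : Fin d → ℝ) (hp : IsProbVec p) (hq : IsProbVec q)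
    (h : ∃ m : ℕ, 1 ≤ m ∧ ∃ r : Fin m → ℝ, IsProbVec r ∧ Maj (tensor p r) (tensor q r)) :
    (Finset.univ.filter (fun i => q i ≠ 0)).card ≤
      (Finset.univ.filter (fun i => p i ≠ 0)).card :=
  coherence_rank_nonincreasing_under_catalytic_majorization_general d p q hq h
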